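/- Let S be an inverse semigroup, let F be a filter in E(S), let H = F↑, and let F̄ = {s ∈ S : for all f ∈ F, inv(s)·f·s ∈ F and s·f·inv(s) ∈ F}. Then: (a) for every a ∈ F̄, inv(a)·a ∈ F, so the left coset (aH)↑ is defined, and it satisfies (((aH)↑)⁻¹·(aH)↑)↑ = H and ((aH)↑·((aH)↑)⁻¹)↑ = H; (b) for a, b ∈ F̄, (aH)↑ = (bH)↑ if and only if there exists c ∈ F̄ with c ≤ a and c ≤ b; (c) for a, b ∈ F̄, ((a·b)H)↑ is the smallest closed atlas containing the elementwise product (aH)↑·(bH)↑; (d) every closed directed atlas A with (A⁻¹·A)↑ = H and (A·A⁻¹)↑ = H equals (aH)↑ for some a ∈ F̄. (Consequently the local group of the groupoid of filters at the identity H is isomorphic to F̄/σ.) -/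

import Mathlib

namespace InvSgpPaper

/-- `inv` makes the semigroup `S` an inverse semigroup: `a * inv a * a = a`,
`inv a * a * inv a = inv a`, and all idempotents commute. -/
structure IsInvSgp (S : Type*) [Semigroup S] (inv : S → S) : Prop where
  mul_inv_mul : ∀ a : S, a * inv a * a = a
  inv_mul_inv : ∀ a : S, inv a * a * inv a = inv a
  idem_comm : ∀ e f : S, e * e = e → f * f = f → e * f = f * e

section Defs

variable {S X Y : Type*} [Semigroup S]

/-- The natural partial order on an inverse semigroup:
`a ≤ b` iff `a = e * b` for some idempotent `e`. -/
def nle (a b : S) : Prop := ∃ e : S, e * e = e ∧ a = e * b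

/-- The upward closure `A↑` of a subset `A`. -/
def up (A : Set S) : Set S := {s : S | ∃ a ∈ A, nle a s}

/-- A closed inverse subsemigroup: closed under multiplication, under `inv`,
and upward closed (`H = H↑`). -/
def IsClosedInvSub (inv : S → S) (H : Set S) : Prop :=
  (∀ a ∈ H, ∀ b ∈ H, a * b ∈ H) ∧ (∀ a ∈ H, inv a ∈ H) ∧ up H = H

/-- The left coset `(sH)↑ = {x | s * h ≤ x for some h ∈ H}`. -/
def lcoset (s : S) (H : Set S) : Set S := {x : S | ∃ h ∈ H, nle (s * h) x}

/-- The set of idempotents of a subset `A`. -/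
def idemSet (A : Set S) : Set S := {e ∈ A | e * e = e}

/-- A filter in `E(S)`: a nonempty set of idempotents closed under
multiplication and upward closed within `E(S)`. -/
def IsFilterE (F : Set S) : Prop :=
  F.Nonempty ∧ (∀ e ∈ F, e * e = e) ∧ (∀ e ∈ F, ∀ f ∈ F, e * f ∈ F) ∧
    (∀ e ∈ F, ∀ f : S, f * f = f → nle e f → f ∈ F)

/-- `F̄ = {s ∈ S : ∀ f ∈ F, inv s * f * s ∈ F ∧ s * f * inv s ∈ F}`. -/
def fbar (inv : S → S) (F : Set S) : Set S :=
  {s : S | ∀ f ∈ F, inv s * f * s ∈ F ∧ s * f * inv s ∈ F}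

/-- The minimum group congruence `σ`: `a σ b` iff some `c` satisfies `c ≤ a` and `c ≤ b`. -/
def sigmaRel (a b : S) : Prop := ∃ c : S, nle c a ∧ nle c b

/-- The elementwise product of two subsets. -/
def setMul (A B : Set S) : Set S := {x : S | ∃ a ∈ A, ∃ b ∈ B, x = a * b}

/-- The elementwise inverse `A⁻¹` of a subset. -/
def setInv (inv : S → S) (A : Set S) : Set S := inv '' A

/-- An atlas: a subset `A` with `A·A⁻¹·A = A`. -/
def IsAtlas (inv : S → S) (A : Set S) : Prop := setMul (setMul A (setInv inv A)) A = A

/-- A (down-)directed subset: nonempty, and any two elements have a common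
lower bound inside it. -/
def IsDirectedSet (A : Set S) : Prop :=
  A.Nonempty ∧ ∀ a ∈ A, ∀ b ∈ A, ∃ c ∈ A, nle c a ∧ nle c b

/-- An action of `S` on `X` by partial maps, axioms (A1) and (A2). -/
def IsAction (act : S → X → Option X) : Prop :=
  (∀ e : S, e * e = e → ∀ x y : X, act e x = some y → y = x) ∧
    (∀ (s t : S) (x : X), act (s * t) x = (act t x).bind (act s))

/-- Transitivity of an action. -/
def IsTransitiveAct (act : S → X → Option X) : Prop :=
  ∀ x y : X, ∃ s : S, act s x = some y

/-- Effectiveness of an action: every point is in the domain of some element. -/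
def IsEffectiveAct (act : S → X → Option X) : Prop :=
  ∀ x : X, ∃ (s : S) (x' : X), act s x = some x'

/-- The stabilizer of a point. -/
def stab (act : S → X → Option X) (x : X) : Set S := {s : S | act s x = some x}

/-- A morphism of `S`-actions. -/
def IsMorphism (actX : S → X → Option X) (actY : S → Y → Option Y) (α : X → Y) : Prop :=
  ∀ (s : S) (x x' : X), actX s x = some x' → actY s (α x) = some (α x')

/-- A strong morphism of `S`-actions. -/
def IsStrongMorphism (actX : S → X → Option X) (actY : S → Y → Option Y)
    (α : X → Y) : Prop :=
  IsMorphism actX actY α ∧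
    ∀ (s : S) (x : X) (y' : Y), actY s (α x) = some y' → ∃ x' : X, actX s x = some x'

end Defs

/-! `F̄` is the normalizer of `H = F↑`: the elements `a` whose conjugations `h ↦ a⁻¹ h a` and
`h ↦ a h a⁻¹` preserve `H`. Cosets of a closed inverse subsemigroup then behave as in a
group: `(aH)↑ = (bH)↑` iff `a⁻¹ b ∈ H`, and for normalizing `b` one has `h b ≥ b (b⁻¹ h b)`,
so `(aH)↑ (bH)↑ ⊆ ((ab)H)↑`. For (b), `a⁻¹ b ≥ f ∈ F` makes `a f` a common lower bound of `a`
and `b`, and conversely `c ≤ a, b` gives `c⁻¹ c ≤ a⁻¹ b`. For (d), a closed directed atlas `A`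
is `(a (A⁻¹A)↑)↑` for any `a ∈ A`: if `h ≥ u⁻¹ v` and `w ≤ u, v` in `A`, then
`a w⁻¹ w ∈ A` lies below `a h`; and `a` normalizes `H` since `a⁻¹ (u v⁻¹) a = (a⁻¹ u)(v⁻¹ a)`. -/

namespace IsInvSgp

variable {S : Type*} [Semigroup S] {inv : S → S} (hS : IsInvSgp S inv)
include hS

theorem mul_idem {e f : S} (he : e * e = e) (hf : f * f = f) : e * f * (e * f) = e * f :=
  calc e * f * (e * f) = e * (f * e) * f := by simp only [mul_assoc]
    _ = e * e * (f * f) := by rw [hS.idem_comm f e hf he]; simp only [mul_assoc]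
    _ = e * f := by rw [he, hf]

theorem inv_mul_self_idem (a : S) : inv a * a * (inv a * a) = inv a * a := by
  rw [← mul_assoc, hS.inv_mul_inv]

theorem mul_inv_self_idem (a : S) : a * inv a * (a * inv a) = a * inv a := by
  rw [← mul_assoc, hS.mul_inv_mul]

theorem eq_inv_of_mul_mul {a x : S} (h1 : a * x * a = a) (h2 : x * a * x = x) : x = inv a := by
  have hxa : x * a * (x * a) = x * a := by rw [← mul_assoc, h2]
  have hax : a * x * (a * x) = a * x := by rw [← mul_assoc, h1]
  have hx : x = inv a * a * x :=
    calc x = x * (a * inv a * a) * x := by rw [hS.mul_inv_mul, h2]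
      _ = (x * a) * (inv a * a) * x := by simp only [mul_assoc]
      _ = (inv a * a) * (x * a * x) := by
          rw [hS.idem_comm _ _ hxa (hS.inv_mul_self_idem a)]; simp only [mul_assoc]
      _ = inv a * a * x := by rw [h2]
  have hinv : inv a = inv a * a * x :=
    calc inv a = inv a * (a * x * a) * inv a := by rw [h1, hS.inv_mul_inv]
      _ = inv a * ((a * x) * (a * inv a)) := by simp only [mul_assoc]
      _ = (inv a * a * inv a) * (a * x) := by
          rw [hS.idem_comm _ _ hax (hS.mul_inv_self_idem a)]; simp only [mul_assoc]
      _ = inv a * a * x := by rw [hS.inv_mul_inv, mul_assoc]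
  rw [hx, ← hinv]

theorem inv_inv (a : S) : inv (inv a) = a :=
  (hS.eq_inv_of_mul_mul (hS.inv_mul_inv a) (hS.mul_inv_mul a)).symm

theorem inv_of_idem {e : S} (he : e * e = e) : inv e = e :=
  (hS.eq_inv_of_mul_mul (by rw [he, he]) (by rw [he, he])).symm

theorem mul_inv_rev (a b : S) : inv (a * b) = inv b * inv a := by
  have hc := hS.idem_comm _ _ (hS.mul_inv_self_idem b) (hS.inv_mul_self_idem a)
  refine (hS.eq_inv_of_mul_mul ?_ ?_).symm
  · calc a * b * (inv b * inv a) * (a * b) = a * ((b * inv b) * (inv a * a)) * b := by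
          simp only [mul_assoc]
      _ = (a * inv a * a) * (b * inv b * b) := by rw [hc]; simp only [mul_assoc]
      _ = a * b := by rw [hS.mul_inv_mul, hS.mul_inv_mul]
  · calc inv b * inv a * (a * b) * (inv b * inv a)
          = inv b * ((inv a * a) * (b * inv b)) * inv a := by simp only [mul_assoc]
      _ = (inv b * b * inv b) * (inv a * a * inv a) := by rw [← hc]; simp only [mul_assoc]
      _ = inv b * inv a := by rw [hS.inv_mul_inv, hS.inv_mul_inv]

theorem conj_idem {e : S} (a : S) (he : e * e = e) :
    a * e * inv a * (a * e * inv a) = a * e * inv a :=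
  calc a * e * inv a * (a * e * inv a) = a * (e * (inv a * a)) * (e * inv a) := by
        simp only [mul_assoc]
    _ = (a * inv a * a) * (e * e) * inv a := by
        rw [hS.idem_comm _ _ he (hS.inv_mul_self_idem a)]; simp only [mul_assoc]
    _ = a * e * inv a := by rw [hS.mul_inv_mul, he]

theorem inv_conj_idem {e : S} (a : S) (he : e * e = e) :
    inv a * e * a * (inv a * e * a) = inv a * e * a := by
  simpa only [hS.inv_inv] using hS.conj_idem (inv a) he

theorem mul_idem_eq_conj_mul {e : S} (a : S) (he : e * e = e) : a * e = a * e * inv a * a :=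
  calc a * e = (a * inv a * a) * e := by rw [hS.mul_inv_mul]
    _ = a * (e * (inv a * a)) := by
        rw [mul_assoc a, mul_assoc a, hS.idem_comm _ _ (hS.inv_mul_self_idem a) he]
    _ = a * e * inv a * a := by simp only [mul_assoc]

theorem nle_refl (a : S) : nle a a :=
  ⟨a * inv a, hS.mul_inv_self_idem a, (hS.mul_inv_mul a).symm⟩

theorem nle_trans {a b c : S} (hab : nle a b) (hbc : nle b c) : nle a c := by
  obtain ⟨e, he, rfl⟩ := hab
  obtain ⟨f, hf, rfl⟩ := hbc
  exact ⟨e * f, hS.mul_idem he hf, (mul_assoc e f c).symm⟩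

theorem nle_mul {a b c d : S} (hab : nle a b) (hcd : nle c d) : nle (a * c) (b * d) := by
  obtain ⟨e, he, rfl⟩ := hab
  obtain ⟨f, hf, rfl⟩ := hcd
  refine ⟨e * (b * f * inv b), hS.mul_idem he (hS.conj_idem b hf), ?_⟩
  calc e * b * (f * d) = e * (b * f) * d := by simp only [mul_assoc]
    _ = e * (b * f * inv b * b) * d := by rw [← hS.mul_idem_eq_conj_mul b hf]
    _ = e * (b * f * inv b) * (b * d) := by simp only [mul_assoc]

theorem nle_mul_left (c : S) {a b : S} (h : nle a b) : nle (c * a) (c * b) :=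
  hS.nle_mul (hS.nle_refl c) h

theorem nle_mul_right (c : S) {a b : S} (h : nle a b) : nle (a * c) (b * c) :=
  hS.nle_mul h (hS.nle_refl c)

theorem nle_inv {a b : S} (h : nle a b) : nle (inv a) (inv b) := by
  obtain ⟨e, he, rfl⟩ := h
  refine ⟨inv b * e * b, hS.inv_conj_idem b he, ?_⟩
  rw [hS.mul_inv_rev, hS.inv_of_idem he]
  simpa only [hS.inv_inv] using hS.mul_idem_eq_conj_mul (inv b) he

theorem nle_mul_idem {e : S} (a : S) (he : e * e = e) : nle (a * e) a :=
  ⟨a * e * inv a, hS.conj_idem a he, hS.mul_idem_eq_conj_mul a he⟩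

end IsInvSgp

theorem nle_idem_mul {S : Type*} [Semigroup S] {e : S} (a : S) (he : e * e = e) :
    nle (e * a) a :=
  ⟨e, he, rfl⟩

section Cosets

variable {S : Type*} [Semigroup S] {inv : S → S} (hS : IsInvSgp S inv)
include hS

theorem subset_up (A : Set S) : A ⊆ up A := fun a ha => ⟨a, ha, hS.nle_refl a⟩

theorem mem_up_of_nle {A : Set S} {x y : S} (hx : x ∈ up A) (hxy : nle x y) : y ∈ up A := by
  obtain ⟨a, ha, hax⟩ := hx
  exact ⟨a, ha, hS.nle_trans hax hxy⟩

theorem up_up (A : Set S) : up (up A) = up A := by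
  refine Set.Subset.antisymm ?_ (subset_up hS _)
  rintro y ⟨x, hx, hxy⟩
  exact mem_up_of_nle hS hx hxy

theorem up_lcoset (s : S) (H : Set S) : up (lcoset s H) = lcoset s H := by
  refine Set.Subset.antisymm ?_ (subset_up hS _)
  rintro x ⟨y, ⟨h, hh, hy⟩, hyx⟩
  exact ⟨h, hh, hS.nle_trans hy hyx⟩

theorem subset_setMul_setInv_setMul (A : Set S) :
    A ⊆ setMul (setMul A (setInv inv A)) A :=
  fun a ha => ⟨a * inv a, ⟨a, ha, inv a, ⟨a, ha, rfl⟩, rfl⟩, a, ha, (hS.mul_inv_mul a).symm⟩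

variable {H : Set S} (hH : IsClosedInvSub inv H)
include hH

omit hS in
theorem IsClosedInvSub.mem_of_nle {x y : S} (hx : x ∈ H) (hxy : nle x y) : y ∈ H :=
  hH.2.2 ▸ ⟨x, hx, hxy⟩

theorem mem_lcoset_iff {a : S} (haa : inv a * a ∈ H) (x : S) :
    x ∈ lcoset a H ↔ inv a * x ∈ H := by
  refine ⟨fun ⟨h, hh, hx⟩ => hH.mem_of_nle (hH.1 _ haa _ hh) ?_, fun hx => ⟨_, hx, ?_⟩⟩
  · simpa only [mul_assoc] using hS.nle_mul_left (inv a) hx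
  · simpa only [mul_assoc] using nle_idem_mul x (hS.mul_inv_self_idem a)

omit hH in
theorem self_mem_lcoset {a : S} (haa : inv a * a ∈ H) : a ∈ lcoset a H :=
  ⟨inv a * a, haa, by rw [← mul_assoc, hS.mul_inv_mul]; exact hS.nle_refl a⟩

theorem lcoset_subset_of_inv_mul_mem {a b : S} (hab : inv a * b ∈ H) :
    lcoset b H ⊆ lcoset a H := by
  rintro x ⟨h, hh, hx⟩
  refine ⟨inv a * b * h, hH.1 _ hab _ hh, hS.nle_trans ?_ hx⟩
  simpa only [mul_assoc] using nle_idem_mul (b * h) (hS.mul_inv_self_idem a)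

theorem lcoset_eq_lcoset_iff {a b : S} (haa : inv a * a ∈ H) (hbb : inv b * b ∈ H) :
    lcoset a H = lcoset b H ↔ inv a * b ∈ H := by
  refine ⟨fun heq => (mem_lcoset_iff hS hH haa b).1 (heq ▸ self_mem_lcoset hS hbb), fun hab => ?_⟩
  have hba : inv b * a ∈ H := by simpa only [hS.mul_inv_rev, hS.inv_inv] using hH.2.1 _ hab
  exact (lcoset_subset_of_inv_mul_mem hS hH hba).antisymm (lcoset_subset_of_inv_mul_mem hS hH hab)

theorem up_setInv_lcoset_mul_lcoset {a : S} (haa : inv a * a ∈ H) :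
    up (setMul (setInv inv (lcoset a H)) (lcoset a H)) = H := by
  refine Set.Subset.antisymm ?_ fun s hs => ?_
  · rintro s ⟨_, ⟨_, ⟨x, ⟨h, hh, hx⟩, rfl⟩, y, ⟨k, hk, hy⟩, rfl⟩, hs⟩
    have hle : nle (inv h * ((inv a * a) * k)) (inv x * y) := by
      simpa only [hS.mul_inv_rev, mul_assoc] using hS.nle_mul (hS.nle_inv hx) hy
    exact hH.mem_of_nle (hH.mem_of_nle (hH.1 _ (hH.2.1 _ hh) _ (hH.1 _ haa _ hk)) hle) hs
  · refine ⟨inv a * (a * s), ⟨_, ⟨a, self_mem_lcoset hS haa, rfl⟩, _, ⟨s, hs, hS.nle_refl _⟩,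
      rfl⟩, ?_⟩
    simpa only [mul_assoc] using nle_idem_mul s (hS.inv_mul_self_idem a)

omit hH in
theorem lcoset_mul_subset_of_up_eq {a b : S} {C : Set S} (haa : inv a * a ∈ H) (hC : up C = C)
    (hsub : setMul (lcoset a H) (lcoset b H) ⊆ C) : lcoset (a * b) H ⊆ C := by
  rintro x ⟨h, hh, hx⟩
  have hmem : a * (b * h) ∈ C :=
    hsub ⟨a, self_mem_lcoset hS haa, b * h, ⟨h, hh, hS.nle_refl _⟩, rfl⟩
  exact hC ▸ ⟨_, hmem, by rwa [← mul_assoc]⟩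

theorem isAtlas_lcoset {c : S} (hcc : inv c * c ∈ H) : IsAtlas inv (lcoset c H) := by
  refine Set.Subset.antisymm ?_ (subset_setMul_setInv_setMul hS _)
  rintro _ ⟨_, ⟨x, ⟨h₁, hh₁, hx⟩, _, ⟨y, ⟨h₂, hh₂, hy⟩, rfl⟩, rfl⟩, z, ⟨h₃, hh₃, hz⟩, rfl⟩
  refine ⟨h₁ * inv h₂ * (inv c * c) * h₃,
    hH.1 _ (hH.1 _ (hH.1 _ hh₁ _ (hH.2.1 _ hh₂)) _ hcc) _ hh₃, ?_⟩
  simpa only [hS.mul_inv_rev, mul_assoc] using hS.nle_mul (hS.nle_mul hx (hS.nle_inv hy)) hz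

end Cosets

def Normalizes {S : Type*} [Semigroup S] (inv : S → S) (H : Set S) (a : S) : Prop :=
  ∀ h ∈ H, inv a * h * a ∈ H ∧ a * h * inv a ∈ H

section Normalizer

variable {S : Type*} [Semigroup S] {inv : S → S} (hS : IsInvSgp S inv)
  {H : Set S} (hH : IsClosedInvSub inv H)
include hS hH

theorem up_lcoset_mul_setInv_lcoset {a : S} (haa : inv a * a ∈ H) (ha : Normalizes inv H a) :
    up (setMul (lcoset a H) (setInv inv (lcoset a H))) = H := by
  refine Set.Subset.antisymm ?_ fun s hs => ?_
  · rintro s ⟨_, ⟨x, ⟨h, hh, hx⟩, _, ⟨y, ⟨k, hk, hy⟩, rfl⟩, rfl⟩, hs⟩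
    have hle : nle (a * (h * inv k) * inv a) (x * inv y) := by
      simpa only [hS.mul_inv_rev, mul_assoc] using hS.nle_mul hx (hS.nle_inv hy)
    exact hH.mem_of_nle (hH.mem_of_nle (ha _ (hH.1 _ hh _ (hH.2.1 _ hk))).2 hle) hs
  · have hsa : s * a ∈ lcoset a H :=
      ⟨inv a * s * a, (ha s hs).1, by
        simpa only [mul_assoc] using nle_idem_mul (s * a) (hS.mul_inv_self_idem a)⟩
    refine ⟨s * a * inv a, ⟨s * a, hsa, inv a, ⟨a, self_mem_lcoset hS haa, rfl⟩, rfl⟩, ?_⟩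
    simpa only [mul_assoc] using hS.nle_mul_idem s (hS.mul_inv_self_idem a)

theorem lcoset_mul_subset {a b : S} (hb : Normalizes inv H b) :
    setMul (lcoset a H) (lcoset b H) ⊆ lcoset (a * b) H := by
  rintro _ ⟨x, ⟨h, hh, hx⟩, y, ⟨k, hk, hy⟩, rfl⟩
  refine ⟨inv b * h * b * k, hH.1 _ (hb h hh).1 _ hk, ?_⟩
  have hhb : nle (b * (inv b * h * b)) (h * b) := by
    simpa only [mul_assoc] using nle_idem_mul (h * b) (hS.mul_inv_self_idem b)
  have hle : nle (a * (b * (inv b * h * b)) * k) (a * h * (b * k)) := by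
    simpa only [mul_assoc] using hS.nle_mul_right k (hS.nle_mul_left a hhb)
  simpa only [mul_assoc] using hS.nle_trans hle (hS.nle_mul hx hy)

theorem normalizes_of_up_eq {A : Set S} (hAA : up (setMul (setInv inv A) A) = H)
    (hAA' : up (setMul A (setInv inv A)) = H) {a : S} (ha : a ∈ A) : Normalizes inv H a := by
  have hmem : ∀ x ∈ A, ∀ y ∈ A, inv x * y ∈ H := fun x hx y hy =>
    hAA ▸ subset_up hS _ ⟨inv x, ⟨x, hx, rfl⟩, y, hy, rfl⟩
  have hmem' : ∀ x ∈ A, ∀ y ∈ A, x * inv y ∈ H := fun x hx y hy =>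
    hAA' ▸ subset_up hS _ ⟨x, hx, inv y, ⟨y, hy, rfl⟩, rfl⟩
  intro h hh
  constructor
  · rw [← hAA'] at hh
    obtain ⟨_, ⟨u, hu, _, ⟨v, hv, rfl⟩, rfl⟩, hle⟩ := hh
    refine hH.mem_of_nle (hH.1 _ (hmem a ha u hu) _ (hmem v hv a ha)) ?_
    simpa only [mul_assoc] using hS.nle_mul_right a (hS.nle_mul_left (inv a) hle)
  · rw [← hAA] at hh
    obtain ⟨_, ⟨_, ⟨u, hu, rfl⟩, v, hv, rfl⟩, hle⟩ := hh
    refine hH.mem_of_nle (hH.1 _ (hmem' a ha u hu) _ (hmem' v hv a ha)) ?_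
    simpa only [mul_assoc] using hS.nle_mul_right (inv a) (hS.nle_mul_left a hle)

end Normalizer

theorem eq_lcoset_of_isDirectedSet {S : Type*} [Semigroup S] {inv : S → S} (hS : IsInvSgp S inv)
    {A : Set S} (hA : up A = A) (hdir : IsDirectedSet A) (hatlas : IsAtlas inv A) {a : S}
    (ha : a ∈ A) : A = lcoset a (up (setMul (setInv inv A) A)) := by
  refine Set.Subset.antisymm (fun x hx => ⟨inv a * x,
    subset_up hS _ ⟨inv a, ⟨a, ha, rfl⟩, x, hx, rfl⟩,
    by simpa only [mul_assoc] using nle_idem_mul x (hS.mul_inv_self_idem a)⟩) ?_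
  rintro x ⟨h, ⟨_, ⟨_, ⟨u, hu, rfl⟩, v, hv, rfl⟩, hle⟩, hx⟩
  obtain ⟨w, hw, hwu, hwv⟩ := hdir.2 u hu v hv
  have hmem : a * inv w * w ∈ A :=
    hatlas ▸ ⟨a * inv w, ⟨a, ha, inv w, ⟨w, hw, rfl⟩, rfl⟩, w, hw, rfl⟩
  have hww : nle (inv w * w) h := hS.nle_trans (hS.nle_mul (hS.nle_inv hwu) hwv) hle
  exact hA ▸ ⟨_, hmem, hS.nle_trans (by simpa only [mul_assoc] using hS.nle_mul_left a hww) hx⟩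

section Filter

variable {S : Type*} [Semigroup S] {inv : S → S} (hS : IsInvSgp S inv) {F : Set S}
include hS

theorem isClosedInvSub_up (hF : IsFilterE F) : IsClosedInvSub inv (up F) := by
  refine ⟨?_, ?_, up_up hS F⟩
  · rintro _ ⟨e, he, hex⟩ _ ⟨f, hf, hfy⟩
    exact ⟨e * f, hF.2.2.1 e he f hf, hS.nle_mul hex hfy⟩
  · rintro _ ⟨e, he, hex⟩
    exact ⟨e, he, hS.inv_of_idem (hF.2.1 e he) ▸ hS.nle_inv hex⟩

omit hS in
theorem mem_of_idem_mem_up (hF : IsFilterE F) {e : S} (he : e ∈ up F) (hee : e * e = e) : e ∈ F :=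
  let ⟨f, hf, hfe⟩ := he
  hF.2.2.2 f hf e hee hfe

theorem mem_fbar_of_mem (hF : IsFilterE F) {e : S} (he : e ∈ F) : e ∈ fbar inv F := by
  have hee := hF.2.1 e he
  have hconj : ∀ f ∈ F, e * f * e = e * f := fun f hf => by
    rw [mul_assoc, hS.idem_comm f e (hF.2.1 f hf) hee, ← mul_assoc, hee]
  intro f hf
  rw [hS.inv_of_idem hee, hconj f hf]
  exact ⟨hF.2.2.1 e he f hf, hF.2.2.1 e he f hf⟩

theorem mul_mem_fbar {a b : S} (ha : a ∈ fbar inv F) (hb : b ∈ fbar inv F) :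
    a * b ∈ fbar inv F := by
  intro f hf
  constructor
  · simpa only [hS.mul_inv_rev, mul_assoc] using (hb _ (ha f hf).1).1
  · simpa only [hS.mul_inv_rev, mul_assoc] using (ha _ (hb f hf).2).2

theorem inv_mul_self_mem_of_mem_fbar (hF : IsFilterE F) {a : S} (ha : a ∈ fbar inv F) :
    inv a * a ∈ F := by
  obtain ⟨f, hf⟩ := hF.1
  refine hF.2.2.2 _ (ha f hf).1 _ (hS.inv_mul_self_idem a) ⟨_, hS.inv_conj_idem a (hF.2.1 f hf), ?_⟩
  conv_rhs => rw [mul_assoc, ← mul_assoc a, hS.mul_inv_mul]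

theorem normalizes_up_of_mem_fbar {a : S} (ha : a ∈ fbar inv F) : Normalizes inv (up F) a := by
  rintro h ⟨f, hf, hfh⟩
  exact ⟨⟨_, (ha f hf).1, hS.nle_mul_right a (hS.nle_mul_left (inv a) hfh)⟩,
    ⟨_, (ha f hf).2, hS.nle_mul_right (inv a) (hS.nle_mul_left a hfh)⟩⟩

theorem mem_fbar_of_normalizes (hF : IsFilterE F) {a : S} (ha : Normalizes inv (up F) a) :
    a ∈ fbar inv F := fun f hf =>
  ⟨mem_of_idem_mem_up hF (ha f (subset_up hS F hf)).1 (hS.inv_conj_idem a (hF.2.1 f hf)),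
    mem_of_idem_mem_up hF (ha f (subset_up hS F hf)).2 (hS.conj_idem a (hF.2.1 f hf))⟩

theorem inv_mul_mem_up_iff (hF : IsFilterE F) {a b : S} (ha : a ∈ fbar inv F) :
    inv a * b ∈ up F ↔ ∃ c ∈ fbar inv F, nle c a ∧ nle c b := by
  constructor
  · rintro ⟨f, hf, hfab⟩
    refine ⟨a * f, mul_mem_fbar hS ha (mem_fbar_of_mem hS hF hf),
      hS.nle_mul_idem a (hF.2.1 f hf), hS.nle_trans (hS.nle_mul_left a hfab) ?_⟩
    simpa only [mul_assoc] using nle_idem_mul b (hS.mul_inv_self_idem a)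
  · rintro ⟨c, hc, hca, hcb⟩
    exact ⟨_, inv_mul_self_mem_of_mem_fbar hS hF hc, hS.nle_mul (hS.nle_inv hca) hcb⟩

end Filter

/-- Description of the local group of the groupoid of filters at
the identity `H = F↑`, in terms of the cosets `(aH)↑` with `a ∈ F̄`. -/
theorem stmt18 {S : Type*} [Semigroup S] (inv : S → S) (hS : IsInvSgp S inv)
    (F : Set S) (hF : IsFilterE F) (H : Set S) (hH : H = up F) :
    -- (a) each a ∈ F̄ gives a well-defined coset (aH)↑ in the local group at H
    (∀ a ∈ fbar inv F, inv a * a ∈ F ∧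
      up (setMul (setInv inv (lcoset a H)) (lcoset a H)) = H ∧
      up (setMul (lcoset a H) (setInv inv (lcoset a H))) = H) ∧
    -- (b) (aH)↑ = (bH)↑ iff a σ b inside F̄
    (∀ a ∈ fbar inv F, ∀ b ∈ fbar inv F,
      (lcoset a H = lcoset b H ↔ ∃ c ∈ fbar inv F, nle c a ∧ nle c b)) ∧
    -- (c) ((a*b)H)↑ is the smallest closed atlas containing (aH)↑ · (bH)↑
    (∀ a ∈ fbar inv F, ∀ b ∈ fbar inv F,
      setMul (lcoset a H) (lcoset b H) ⊆ lcoset (a * b) H ∧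
      up (lcoset (a * b) H) = lcoset (a * b) H ∧
      IsAtlas inv (lcoset (a * b) H) ∧
      (∀ C : Set S, up C = C → IsAtlas inv C →
        setMul (lcoset a H) (lcoset b H) ⊆ C → lcoset (a * b) H ⊆ C)) ∧
    -- (d) every element of the local group at H arises this way
    (∀ A : Set S, up A = A → IsDirectedSet A → IsAtlas inv A →
      up (setMul (setInv inv A) A) = H → up (setMul A (setInv inv A)) = H →
      ∃ a ∈ fbar inv F, A = lcoset a H) := by
  subst hH
  have hH := isClosedInvSub_up hS hF
  have hinvF {a : S} (ha : a ∈ fbar inv F) : inv a * a ∈ F := inv_mul_self_mem_of_mem_fbar hS hF ha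
  have hinvH {a : S} (ha : a ∈ fbar inv F) : inv a * a ∈ up F := subset_up hS F (hinvF ha)
  refine ⟨fun a ha => ?_, fun a ha b hb => ?_, fun a ha b hb => ?_,
    fun A hA hdir hatlas hAA hAA' => ?_⟩
  · exact ⟨hinvF ha, up_setInv_lcoset_mul_lcoset hS hH (hinvH ha),
      up_lcoset_mul_setInv_lcoset hS hH (hinvH ha) (normalizes_up_of_mem_fbar hS ha)⟩
  · rw [lcoset_eq_lcoset_iff hS hH (hinvH ha) (hinvH hb), inv_mul_mem_up_iff hS hF ha]
  · exact ⟨lcoset_mul_subset hS hH (normalizes_up_of_mem_fbar hS hb), up_lcoset hS _ _,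
      isAtlas_lcoset hS hH (hinvH (mul_mem_fbar hS ha hb)),
      fun C hC _ hsub => lcoset_mul_subset_of_up_eq hS (hinvH ha) hC hsub⟩
  · obtain ⟨a, ha⟩ := hdir.1
    refine ⟨a, mem_fbar_of_normalizes hS hF (normalizes_of_up_eq hS hH hAA hAA' ha), ?_⟩
    rw [← hAA]
    exact eq_lcoset_of_isDirectedSet hS hA hdir hatlas ha

end InvSgpPaper
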